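/- Let m, ℓ be integers with 1 ≤ m ≤ 2ℓ ≤ 2m, and let ℛ be the set of standard Young tableaux with two rows of lengths ℓ and m − ℓ whose entries are exactly 1, …, m. For R ∈ ℛ define the 2ℓ-covector α_R on ℝ^{2m} as in the product formula α_R := ∏(dxy_{R¹_j} − dxy_{R²_j}) for j ≤ m−ℓ, wedged with dxy_{R¹_j} for m−ℓ < j ≤ ℓ. Then the family {α_R : R ∈ ℛ} is linearly independent. -/

import Mathlib

set_option synthInstance.maxHeartbeats 1000000

/-- A standard Young tableau with two rows of lengths `ℓ` and `m - ℓ`, filled with the entries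
`1, …, m` (here `Fin m`), each appearing exactly once: entries strictly increase along each row
and down each column. -/
structure StdYoungTableau (m ℓ : ℕ) where
  /-- the first row -/
  r1 : Fin ℓ → Fin m
  /-- the second row -/
  r2 : Fin (m - ℓ) → Fin m
  /-- entries increase along the first row -/
  mono1 : StrictMono r1
  /-- entries increase along the second row -/
  mono2 : StrictMono r2
  /-- entries increase down each column -/
  col : ∀ (i : Fin ℓ) (j : Fin (m - ℓ)), (i : ℕ) = (j : ℕ) → r1 i < r2 j
  /-- all entries are distinct (hence, by counting, each of `1, …, m` appears exactly once) -/
  inj : Function.Injective (Sum.elim r1 r2)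

/-- The space of covectors: the dual of `ℝ^{2m}`. -/
abbrev CovectorSpace (m : ℕ) : Type _ :=
  Module.Dual ℝ ((Fin m → ℝ) × (Fin m → ℝ))

/-- The coordinate covector `dx_i`. -/
noncomputable def dxCov (m : ℕ) (i : Fin m) : CovectorSpace m :=
  (LinearMap.proj i).comp (LinearMap.fst ℝ (Fin m → ℝ) (Fin m → ℝ))

/-- The coordinate covector `dy_i`. -/
noncomputable def dyCov (m : ℕ) (i : Fin m) : CovectorSpace m :=
  (LinearMap.proj i).comp (LinearMap.snd ℝ (Fin m → ℝ) (Fin m → ℝ))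

/-- The 2-covector `dxy_i := dx_i ∧ dy_i`. -/
noncomputable def dxyCov (m : ℕ) (i : Fin m) : ExteriorAlgebra ℝ (CovectorSpace m) :=
  ExteriorAlgebra.ι ℝ (dxCov m i) * ExteriorAlgebra.ι ℝ (dyCov m i)

/-- The `2ℓ`-covector `α_R` associated with a two-row tableau `R`. -/
noncomputable def alphaCov (m ℓ : ℕ) (R : StdYoungTableau m ℓ) :
    ExteriorAlgebra ℝ (CovectorSpace m) :=
  (List.ofFn fun j : Fin ℓ =>
    if h : (j : ℕ) < m - ℓ then dxyCov m (R.r1 j) - dxyCov m (R.r2 ⟨(j : ℕ), h⟩)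
    else dxyCov m (R.r1 j)).prod

/-!
Pair `α_R` with the functional `φ_{R₀}` that evaluates a form on the vectors `∂x_a, ∂y_a`,
`a` running through the first row of `R₀`. Expanding the product, `α_R` is a signed sum of
monomials `dxy_{s 1} ∧ ⋯ ∧ dxy_{s ℓ}`, one for each choice of the top or the bottom entry `s j` in
every column, and `φ_{R₀}` kills each monomial whose index set differs from the first row of `R₀`.
Choosing a bottom entry strictly increases `∑ j, s j`, so if the first row of `R₀` has sum at most
that of `R`, only the all-top monomial of `α_R` can survive, and it does exactly when `R = R₀`.
Hence the matrix `(φ_{R₀} α_R)` is unitriangular for the order by first-row sums.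
-/

open Function ExteriorAlgebra

theorem linearIndependent_of_dual_triangular {R M ι κ : Type*} [CommRing R] [AddCommGroup M]
    [Module R M] [LinearOrder κ] {v : ι → M} (φ : ι → Module.Dual R M) (w : ι → κ)
    (hdiag : ∀ i, φ i (v i) = 1) (htri : ∀ i j, w i ≤ w j → i ≠ j → φ i (v j) = 0) :
    LinearIndependent R v := by
  classical
  rw [linearIndependent_iff]
  intro l hl
  by_contra hne
  obtain ⟨i, hi, hmin⟩ :=
    l.support.exists_min_image w (Finsupp.support_nonempty_iff.mpr hne)
  have hφ : φ i (Finsupp.linearCombination R v l) = l i := by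
    rw [Finsupp.linearCombination_apply, Finsupp.sum, map_sum, Finset.sum_eq_single i]
    · rw [map_smul, hdiag, smul_eq_mul, mul_one]
    · intro j hj hji
      rw [map_smul, htri i j (hmin j hj) hji.symm, smul_zero]
    · exact fun hi' => absurd hi hi'
  rw [hl, map_zero] at hφ
  exact Finsupp.mem_support_iff.mp hi hφ.symm

def interleave {α : Type*} {n : ℕ} (p q : Fin n → α) (t : Fin (2 * n)) : α :=
  if (t : ℕ) % 2 = 0 then p ⟨t / 2, by omega⟩ else q ⟨t / 2, by omega⟩

lemma interleave_succ {α : Type*} {n : ℕ} (p q : Fin (n + 1) → α) :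
    interleave p q = Fin.cons (p 0) (Fin.cons (q 0) (interleave (Fin.tail p) (Fin.tail q))) := by
  funext ⟨t, ht⟩
  rcases t with _ | _ | t
  · simp [interleave]
  · simp [interleave]
  · show interleave p q ⟨t + 2, ht⟩ = interleave (Fin.tail p) (Fin.tail q) ⟨t, by omega⟩
    simp only [interleave, Nat.add_mod_right, Fin.tail]
    have : (t + 2) / 2 = t / 2 + 1 := by omega
    split_ifs <;> simp [this, Fin.succ]

lemma interleave_two_mul {α : Type*} {n : ℕ} (p q : Fin n → α) (i : Fin n) :
    interleave p q ⟨2 * i, by omega⟩ = p i := by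
  simp [interleave]

namespace ExteriorAlgebra

variable {R V : Type*} [CommRing R] [AddCommGroup V] [Module R V]

lemma list_prod_ofFn_ι_mul_ι {n : ℕ} (p q : Fin n → V) :
    (List.ofFn fun j => ι R (p j) * ι R (q j)).prod = ιMulti R (2 * n) (interleave p q) := by
  induction n with
  | zero => simp
  | succ n ih =>
    rw [List.ofFn_succ, List.prod_cons, ih, interleave_succ, mul_assoc]
    change _ = ιMulti R (2 * n + 1 + 1) _
    rw [ιMulti_succ_apply, ιMulti_succ_apply]
    rfl

/-- Pairs the degree-`k` component of an element with `v 0 ∧ ⋯ ∧ v (k - 1)`. -/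
noncomputable def evalWedge {k : ℕ} (v : Fin k → V) :
    ExteriorAlgebra R (Module.Dual R V) →ₗ[R] R :=
  liftAlternating (Pi.single k
    (Matrix.detRowAlternating.compLinearMap (LinearMap.pi fun t => Module.Dual.eval R V (v t))))

lemma evalWedge_ιMulti {k : ℕ} (v : Fin k → V) (f : Fin k → Module.Dual R V) :
    evalWedge v (ιMulti R k f) = (Matrix.of fun t u => f t (v u)).det := by
  rw [evalWedge, liftAlternating_apply_ιMulti, Pi.single_eq_same]
  rfl

end ExteriorAlgebra

section Coordinates

variable {m ℓ : ℕ}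

@[simp] lemma dxCov_apply (i : Fin m) (v : (Fin m → ℝ) × (Fin m → ℝ)) : dxCov m i v = v.1 i := rfl

@[simp] lemma dyCov_apply (i : Fin m) (v : (Fin m → ℝ) × (Fin m → ℝ)) : dyCov m i v = v.2 i := rfl

lemma list_prod_ofFn_dxyCov (s : Fin ℓ → Fin m) :
    (List.ofFn fun j => dxyCov m (s j)).prod =
      ιMulti ℝ (2 * ℓ) (interleave (fun j => dxCov m (s j)) (fun j => dyCov m (s j))) :=
  list_prod_ofFn_ι_mul_ι _ _

noncomputable def testVectors (a : Fin ℓ → Fin m) : Fin (2 * ℓ) → (Fin m → ℝ) × (Fin m → ℝ) :=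
  interleave (fun i => (Pi.single (a i) 1, 0)) (fun i => (0, Pi.single (a i) 1))

lemma evalWedge_testVectors_prod_dxyCov_self {a : Fin ℓ → Fin m} (ha : Injective a) :
    evalWedge (testVectors a) (List.ofFn fun j => dxyCov m (a j)).prod = 1 := by
  rw [list_prod_ofFn_dxyCov, evalWedge_ιMulti, ← Matrix.det_one (R := ℝ) (n := Fin (2 * ℓ))]
  congr 1
  ext ⟨t, ht⟩ ⟨u, hu⟩
  simp only [Matrix.of_apply, Matrix.one_apply, testVectors, interleave, Fin.ext_iff]
  split_ifs <;> simp [Pi.single_apply, ha.eq_iff, Fin.ext_iff] <;> omega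

lemma evalWedge_testVectors_prod_dxyCov_eq_zero {s a : Fin ℓ → Fin m} {i : Fin ℓ}
    (hi : ∀ j, s j ≠ a i) :
    evalWedge (testVectors a) (List.ofFn fun j => dxyCov m (s j)).prod = 0 := by
  rw [list_prod_ofFn_dxyCov, evalWedge_ιMulti]
  refine Matrix.det_eq_zero_of_column_eq_zero ⟨2 * i, by omega⟩ fun t => ?_
  rw [Matrix.of_apply, testVectors, interleave_two_mul, interleave]
  split_ifs <;> simp [hi]

end Coordinates

lemma Function.Injective.sum_comp_eq_of_range_eq {ι α M : Type*} [Fintype ι] [AddCommMonoid M]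
    {s a : ι → α} (hs : Injective s) (ha : Injective a) (h : Set.range s = Set.range a)
    (f : α → M) : ∑ j, f (s j) = ∑ i, f (a i) :=
  Fintype.sum_equiv ((Equiv.ofInjective s hs).trans ((Equiv.setCongr h).trans
    (Equiv.ofInjective a ha).symm)) _ _ fun j => by simp [Equiv.apply_ofInjective_symm]

namespace StdYoungTableau

variable {m ℓ : ℕ} (R : StdYoungTableau m ℓ)

lemma r1_ne_r2 (i : Fin ℓ) (j : Fin (m - ℓ)) : R.r1 i ≠ R.r2 j :=
  fun h => Sum.inl_ne_inr (R.inj h)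

lemma range_r2 : Set.range R.r2 = (Set.range R.r1)ᶜ := by
  refine Set.eq_of_subset_of_ncard_le ?_ ?_
  · rintro _ ⟨j, rfl⟩ ⟨i, hi⟩
    exact R.r1_ne_r2 i j hi
  · rw [Set.ncard_compl, Set.ncard_range_of_injective R.mono1.injective,
      Set.ncard_range_of_injective R.mono2.injective]
    simp

lemma eq_of_range_r1_eq {R R' : StdYoungTableau m ℓ} (h : Set.range R.r1 = Set.range R'.r1) :
    R = R' := by
  have h1 : R.r1 = R'.r1 := (R.mono1.range_inj R'.mono1).mp h
  have h2 : R.r2 = R'.r2 := (R.mono2.range_inj R'.mono2).mp (by rw [range_r2, range_r2, h])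
  cases R
  cases R'
  subst h1 h2
  rfl

def weight : ℕ := ∑ j, (R.r1 j : ℕ)

def entry (j : Fin ℓ) (b : Bool) : Fin m :=
  if h : b ∧ (j : ℕ) < m - ℓ then R.r2 ⟨j, h.2⟩ else R.r1 j

@[simp] lemma entry_false (j : Fin ℓ) : R.entry j false = R.r1 j := by
  simp [entry]

lemma r1_le_entry (j : Fin ℓ) (b : Bool) : R.r1 j ≤ R.entry j b := by
  unfold entry
  split_ifs
  · exact (R.col _ _ rfl).le
  · exact le_rfl

lemma r1_lt_entry_true {j : Fin ℓ} (h : (j : ℕ) < m - ℓ) : R.r1 j < R.entry j true := by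
  rw [entry, dif_pos ⟨rfl, h⟩]
  exact R.col _ _ rfl

lemma injective_entry (c : Fin ℓ → Bool) : Injective fun j => R.entry j (c j) := by
  intro j j' h
  simp only [entry] at h
  split_ifs at h
  · exact Fin.ext (Fin.mk.inj_iff.mp (R.mono2.injective h))
  · exact absurd h.symm (R.r1_ne_r2 _ _)
  · exact absurd h (R.r1_ne_r2 _ _)
  · exact R.mono1.injective h

def columnChoices (m ℓ : ℕ) : Finset (Fin ℓ → Bool) :=
  Fintype.piFinset fun j => if (j : ℕ) < m - ℓ then Finset.univ else {false}

lemma alphaCov_eq_sum :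
    alphaCov m ℓ R = ∑ c ∈ columnChoices m ℓ,
      (∏ j, if c j then (-1 : ℝ) else 1) • (List.ofFn fun j => dxyCov m (R.entry j (c j))).prod := by
  have hfactor : ∀ j : Fin ℓ,
      (if h : (j : ℕ) < m - ℓ then dxyCov m (R.r1 j) - dxyCov m (R.r2 ⟨j, h⟩)
        else dxyCov m (R.r1 j)) =
      ∑ b ∈ (if (j : ℕ) < m - ℓ then Finset.univ else {false}),
        (if b then (-1 : ℝ) else 1) • dxyCov m (R.entry j b) := by
    intro j
    split_ifs with h
    · simp [entry, h, sub_eq_neg_add]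
    · simp
  simp only [alphaCov, hfactor]
  rw [← MultilinearMap.mkPiAlgebraFin_apply (R := ℝ), MultilinearMap.map_sum_finset]
  simp_rw [MultilinearMap.map_smul_univ, MultilinearMap.mkPiAlgebraFin_apply]
  rfl

lemma const_false_mem_columnChoices : (fun _ => false) ∈ columnChoices m ℓ := by
  simp only [columnChoices, Fintype.mem_piFinset]
  intro j
  split_ifs <;> simp

lemma eq_of_evalWedge_prod_dxyCov_entry_ne_zero {R R₀ : StdYoungTableau m ℓ}
    (hw : R₀.weight ≤ R.weight) {c : Fin ℓ → Bool} (hc : c ∈ columnChoices m ℓ)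
    (h : evalWedge (testVectors R₀.r1) (List.ofFn fun j => dxyCov m (R.entry j (c j))).prod ≠ 0) :
    c = (fun _ => false) ∧ R = R₀ := by
  have hsub : Set.range R₀.r1 ⊆ Set.range fun j => R.entry j (c j) := by
    rintro _ ⟨i, rfl⟩
    by_contra hi
    exact h (evalWedge_testVectors_prod_dxyCov_eq_zero fun j hj => hi ⟨j, hj⟩)
  have hrange : Set.range (fun j => R.entry j (c j)) = Set.range R₀.r1 :=
    (Set.eq_of_subset_of_ncard_le hsub (by
      rw [Set.ncard_range_of_injective (R.injective_entry c),
        Set.ncard_range_of_injective R₀.mono1.injective])).symm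
  have hsum : ∑ j, (R.entry j (c j) : ℕ) = R₀.weight :=
    (R.injective_entry c).sum_comp_eq_of_range_eq R₀.mono1.injective hrange _
  have hc_false : c = fun _ => false := by
    funext j
    by_contra hj
    have hj' : (j : ℕ) < m - ℓ := by
      by_contra hge
      simpa [hge, hj] using Fintype.mem_piFinset.mp hc j
    have : R.weight < ∑ j, (R.entry j (c j) : ℕ) :=
      Finset.sum_lt_sum (fun j _ => R.r1_le_entry j (c j))
        ⟨j, Finset.mem_univ _, by simpa [hj] using R.r1_lt_entry_true hj'⟩
    omega
  subst hc_false
  exact ⟨rfl, eq_of_range_r1_eq (by simpa using hrange)⟩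

open Classical in
lemma evalWedge_testVectors_alphaCov {R R₀ : StdYoungTableau m ℓ} (hw : R₀.weight ≤ R.weight) :
    evalWedge (testVectors R₀.r1) (alphaCov m ℓ R) = if R = R₀ then 1 else 0 := by
  rw [alphaCov_eq_sum, map_sum, Finset.sum_eq_single (fun _ => false)]
  · simp only [Bool.false_eq_true, ↓reduceIte, Finset.prod_const_one, one_smul, entry_false]
    split_ifs with hR
    · subst hR
      exact evalWedge_testVectors_prod_dxyCov_self R.mono1.injective
    · by_contra h
      exact hR (eq_of_evalWedge_prod_dxyCov_entry_ne_zero hw const_false_mem_columnChoices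
        (by simpa only [entry_false] using h)).2
  · intro c hc hne
    rw [map_smul, smul_eq_zero]
    by_contra! h
    exact hne (eq_of_evalWedge_prod_dxyCov_entry_ne_zero hw hc h.2).1
  · intro h
    exact absurd const_false_mem_columnChoices h

end StdYoungTableau

theorem alphaCov_linearIndependent_general (m ℓ : ℕ) :
    LinearIndependent ℝ (fun R : StdYoungTableau m ℓ => alphaCov m ℓ R) :=
  linearIndependent_of_dual_triangular (fun R₀ => evalWedge (testVectors R₀.r1))
    StdYoungTableau.weight
    (fun R => by simpa using StdYoungTableau.evalWedge_testVectors_alphaCov (R := R) le_rfl)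
    (fun R₀ R hw hne => by
      simpa [Ne.symm hne] using StdYoungTableau.evalWedge_testVectors_alphaCov hw)

/-- For `1 ≤ m ≤ 2ℓ ≤ 2m`, the family of covectors `α_R` on `ℝ^{2m}`, indexed
by the standard Young tableaux `R` with two rows of lengths `ℓ` and `m - ℓ` filled with
`1, …, m`, is linearly independent. -/
theorem alphaCov_linearIndependent
    (m ℓ : ℕ) (hm : 1 ≤ m) (hmℓ : m ≤ 2 * ℓ) (hℓm : ℓ ≤ m) :
    LinearIndependent ℝ (fun R : StdYoungTableau m ℓ => alphaCov m ℓ R) :=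
  alphaCov_linearIndependent_general m ℓ
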